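/- arXiv:1502.01166 — 4 statements merged into one kernel-verified Lean document; each statement's English description precedes it below -/
import Mathlib

section
/- With r : ℕ_0^s → ℝ_{>0} summable, the variance bound I_s(f²) - I_s(f)² ≤ ‖f‖²_{K_r} · max_{k ≠ 0} r(k) is sharp: for k* maximizing r over ℕ_0^s \ {0}, the function f = H_{k*} satisfies ‖f‖²_{K_r} = 1/r(k*) and I_s(f²) - I_s(f)² = 1 = ‖f‖²_{K_r} · r(k*). -/
open MeasureTheory Real

/-- The standard Gaussian density on `ℝ^s`. -/
noncomputable def gaussianDensity (s : ℕ) (x : Fin s → ℝ) : ℝ :=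
  (2 * Real.pi) ^ (-(s : ℝ) / 2) * Real.exp (-(∑ j, x j ^ 2) / 2)

/-- The standard Gaussian measure on `ℝ^s`. -/
noncomputable def gaussianMeasure (s : ℕ) : Measure (Fin s → ℝ) :=
  volume.withDensity (fun x => ENNReal.ofReal (gaussianDensity s x))

/-- The Gaussian integral `I_s(f) = ∫ f(x) φ_s(x) dx`. -/
noncomputable def gaussInt (s : ℕ) (f : (Fin s → ℝ) → ℝ) : ℝ :=
  ∫ x, f x * gaussianDensity s x

/-- The `k`-th normalized probabilists' Hermite polynomial. -/
noncomputable def normHermite (k : ℕ) (x : ℝ) : ℝ :=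
  ((Polynomial.hermite k).map (Int.castRingHom ℝ)).eval x / Real.sqrt (Nat.factorial k)

/-- The multivariate normalized Hermite polynomial `H_k(x) = ∏_j H_{k_j}(x_j)`. -/
noncomputable def multiHermite (s : ℕ) (k : Fin s → ℕ) (x : Fin s → ℝ) : ℝ :=
  ∏ j, normHermite (k j) (x j)

/-- The `k`-th Hermite coefficient `f̂(k) = ∫ f(x) H_k(x) φ_s(x) dx`. -/
noncomputable def hermiteCoeff (s : ℕ) (f : (Fin s → ℝ) → ℝ) (k : Fin s → ℕ) : ℝ :=
  ∫ x, f x * multiHermite s k x * gaussianDensity s x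

/-!
The multivariate Hermite polynomials are orthonormal for the Gaussian weight, since the weight
factorises over the coordinates and the one-dimensional `He_n` are orthogonal: integrating by parts
with `(He_n φ)' = -He_{n+1} φ` gives `∫ He_m He_{n+1} φ = m ∫ He_{m-1} He_n φ`. Hence the Hermite
coefficients of `H_{k*}` are the indicator of `k*`, so `‖H_{k*}‖²_{K_r} = 1 / r(k*)`, while
`I_s(H_{k*}²) = 1` and `I_s(H_{k*}) = ⟨H_{k*}, H_0⟩ = 0` because `k* ≠ 0`.
-/

open Polynomial

theorem Polynomial.derivative_hermite (n : ℕ) :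
    derivative (hermite n) = C (n : ℤ) * hermite (n - 1) := by
  induction n using Nat.twoStepInduction with
  | zero => simp [hermite_zero]
  | one => simp [hermite_zero]
  | more n ih0 ih1 =>
    have h1 : hermite (n + 1) = X * hermite n - C (n : ℤ) * hermite (n - 1) := by
      rw [hermite_succ, ih0]
    rw [Nat.add_sub_cancel] at ih1
    rw [show n + 2 - 1 = n + 1 from rfl, hermite_succ (n + 1), derivative_sub, derivative_mul,
      derivative_X, ih1, derivative_mul, derivative_C, ih0, h1]
    push_cast
    simp only [map_add, map_one, map_ofNat]
    ring

noncomputable def He (n : ℕ) (x : ℝ) : ℝ :=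
  ((hermite n).map (Int.castRingHom ℝ)).eval x

lemma He_zero (x : ℝ) : He 0 x = 1 := by simp [He, hermite_zero]

lemma He_succ (n : ℕ) (x : ℝ) : He (n + 1) x = x * He n x - n * He (n - 1) x := by
  rw [He, hermite_succ, derivative_hermite]
  simp [He]

lemma hasDerivAt_He (n : ℕ) (x : ℝ) : HasDerivAt (He n) (n * He (n - 1) x) x := by
  refine ((hermite n).map (Int.castRingHom ℝ)).hasDerivAt x |>.congr_deriv ?_
  simp [He, derivative_map, derivative_hermite]

lemma hasDerivAt_He_mul_gaussian (n : ℕ) (x : ℝ) :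
    HasDerivAt (fun y => He n y * exp (-(y ^ 2) / 2)) (-(He (n + 1) x * exp (-(x ^ 2) / 2))) x := by
  have hexp : HasDerivAt (fun y : ℝ => exp (-(y ^ 2) / 2)) (-x * exp (-(x ^ 2) / 2)) x := by
    have h : HasDerivAt (fun y : ℝ => -(y ^ 2) / 2) (-x) x := by
      simpa using ((hasDerivAt_pow 2 x).neg.div_const 2).congr_deriv (by ring)
    simpa [mul_comm] using h.exp
  refine ((hasDerivAt_He n x).mul hexp).congr_deriv ?_
  rw [He_succ]
  ring

lemma integrable_eval_mul_exp_neg_sq_div_two (p : ℝ[X]) :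
    Integrable (fun x => p.eval x * exp (-(x ^ 2) / 2)) := by
  have hmonomial (k : ℕ) : Integrable (fun x : ℝ => x ^ k * exp (-(x ^ 2) / 2)) := by
    have h := integrable_rpow_mul_exp_neg_mul_sq (b := 1 / 2) (by norm_num)
      (neg_one_lt_zero.trans_le k.cast_nonneg)
    simp only [rpow_natCast] at h
    convert h using 4
    ring
  have hsum : (fun x => p.eval x * exp (-(x ^ 2) / 2)) = fun x =>
      ∑ i ∈ Finset.range (p.natDegree + 1), p.coeff i * (x ^ i * exp (-(x ^ 2) / 2)) := by
    ext x
    simp only [eval_eq_sum_range, Finset.sum_mul, mul_assoc]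
  rw [hsum]
  exact integrable_finsetSum _ fun i _ => (hmonomial i).const_mul _

lemma integrable_He_mul_He_mul_gaussian (m n : ℕ) :
    Integrable (fun x => He m x * (He n x * exp (-(x ^ 2) / 2))) := by
  simpa [He, mul_assoc] using integrable_eval_mul_exp_neg_sq_div_two
    ((hermite m).map (Int.castRingHom ℝ) * (hermite n).map (Int.castRingHom ℝ))

lemma integral_He_mul_He_succ_mul_gaussian (m n : ℕ) :
    ∫ x, He m x * (He (n + 1) x * exp (-(x ^ 2) / 2)) =
      m * ∫ x, He (m - 1) x * (He n x * exp (-(x ^ 2) / 2)) := by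
  have hparts := integral_mul_deriv_eq_deriv_mul_of_integrable
    (fun x _ => hasDerivAt_He m x) (fun x _ => hasDerivAt_He_mul_gaussian n x)
    (by simpa [Pi.mul_def] using (integrable_He_mul_He_mul_gaussian m (n + 1)).neg)
    (by simpa [Pi.mul_def, mul_assoc] using
      (integrable_He_mul_He_mul_gaussian (m - 1) n).const_mul (m : ℝ))
    (by simpa [Pi.mul_def] using integrable_He_mul_He_mul_gaussian m n)
  simp only [mul_neg, integral_neg, neg_inj] at hparts
  rw [hparts, ← integral_const_mul]
  simp only [mul_assoc]

lemma integral_exp_neg_sq_div_two : ∫ x : ℝ, exp (-(x ^ 2) / 2) = √(2 * π) := by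
  convert integral_gaussian (1 / 2) using 3 <;> ring_nf

lemma integral_He_mul_He_mul_gaussian (m n : ℕ) :
    ∫ x, He m x * (He n x * exp (-(x ^ 2) / 2)) =
      (if m = n then (m.factorial : ℝ) else 0) * √(2 * π) := by
  induction n generalizing m with
  | zero =>
    cases m with
    | zero => simpa [He_zero] using integral_exp_neg_sq_div_two
    | succ m =>
      simp_rw [He_zero, one_mul]
      simpa [He_zero] using integral_He_mul_He_succ_mul_gaussian 0 m
  | succ n ih =>
    rw [integral_He_mul_He_succ_mul_gaussian]
    cases m with
    | zero => simp
    | succ m =>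
      rw [Nat.add_sub_cancel, ih, ← mul_assoc]
      by_cases hmn : m = n
      · simp [hmn, Nat.factorial_succ]
      · simp [hmn]

lemma integral_normHermite_mul_normHermite (m n : ℕ) :
    ∫ x, normHermite m x * normHermite n x * ((2 * π) ^ (-(1 : ℝ) / 2) * exp (-(x ^ 2) / 2)) =
      if m = n then 1 else 0 := by
  have hnorm : (2 * π) ^ (-(1 : ℝ) / 2) = (√(2 * π))⁻¹ := by
    rw [neg_div, rpow_neg (by positivity), sqrt_eq_rpow]
  have hfactor : (fun x => normHermite m x * normHermite n x *
      ((2 * π) ^ (-(1 : ℝ) / 2) * exp (-(x ^ 2) / 2))) = fun x =>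
      ((√(m.factorial : ℝ))⁻¹ * (√(n.factorial : ℝ))⁻¹ * (√(2 * π))⁻¹) *
        (He m x * (He n x * exp (-(x ^ 2) / 2))) := by
    ext x
    rw [hnorm]
    simp only [normHermite, He, div_eq_mul_inv]
    ring
  rw [hfactor, integral_const_mul, integral_He_mul_He_mul_gaussian]
  split_ifs with hmn
  · subst hmn
    have hfact : (0 : ℝ) < m.factorial := mod_cast m.factorial_pos
    have hpi : (0 : ℝ) < √(2 * π) := sqrt_pos.2 (by positivity)
    field_simp
    rw [sq_sqrt hfact.le]
  · simp

lemma gaussianDensity_eq_prod (s : ℕ) (x : Fin s → ℝ) :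
    gaussianDensity s x = ∏ j, ((2 * π) ^ (-(1 : ℝ) / 2) * exp (-(x j ^ 2) / 2)) := by
  rw [Finset.prod_mul_distrib, Finset.prod_const, ← exp_sum, gaussianDensity, Finset.card_univ,
    Fintype.card_fin, ← rpow_natCast, ← rpow_mul (by positivity), ← Finset.sum_div,
    Finset.sum_neg_distrib]
  congr 2
  ring

lemma integral_multiHermite_mul_multiHermite (s : ℕ) (k l : Fin s → ℕ) :
    ∫ x, multiHermite s k x * multiHermite s l x * gaussianDensity s x =
      if k = l then 1 else 0 := by
  simp_rw [multiHermite, gaussianDensity_eq_prod, ← Finset.prod_mul_distrib]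
  rw [integral_fintype_prod_volume_eq_prod (fun j y => normHermite (k j) y * normHermite (l j) y *
    ((2 * π) ^ (-(1 : ℝ) / 2) * exp (-(y ^ 2) / 2)))]
  simp_rw [integral_normHermite_mul_normHermite]
  split_ifs with hkl
  · simp [hkl]
  · obtain ⟨j, hj⟩ := Function.ne_iff.1 hkl
    exact Finset.prod_eq_zero (Finset.mem_univ j) (if_neg hj)

lemma multiHermite_zero (s : ℕ) : multiHermite s 0 = 1 := by
  ext x
  simp [multiHermite, normHermite, hermite_zero]

lemma hermiteCoeff_multiHermite (s : ℕ) (k l : Fin s → ℕ) :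
    hermiteCoeff s (multiHermite s k) l = if k = l then 1 else 0 :=
  integral_multiHermite_mul_multiHermite s k l

lemma gaussInt_multiHermite_sq (s : ℕ) (k : Fin s → ℕ) :
    gaussInt s (fun x => multiHermite s k x ^ 2) = 1 := by
  simpa [gaussInt, sq] using integral_multiHermite_mul_multiHermite s k k

lemma gaussInt_multiHermite_of_ne_zero (s : ℕ) {k : Fin s → ℕ} (hk : k ≠ 0) :
    gaussInt s (multiHermite s k) = 0 := by
  simpa [gaussInt, multiHermite_zero, hk] using integral_multiHermite_mul_multiHermite s k 0

theorem variance_bound_sharp_general (s : ℕ) (r : (Fin s → ℕ) → ℝ)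
    (hrpos : ∀ k, 0 < r k)
    (kstar : Fin s → ℕ) (hk0 : kstar ≠ 0) :
    (∑' k, (r k)⁻¹ * hermiteCoeff s (multiHermite s kstar) k ^ 2) = (r kstar)⁻¹ ∧
    gaussInt s (fun x => multiHermite s kstar x ^ 2)
        - (gaussInt s (multiHermite s kstar)) ^ 2 = 1 ∧
    (1 : ℝ) = (∑' k, (r k)⁻¹ * hermiteCoeff s (multiHermite s kstar) k ^ 2) * r kstar := by
  have hnorm : (∑' k, (r k)⁻¹ * hermiteCoeff s (multiHermite s kstar) k ^ 2) = (r kstar)⁻¹ := by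
    rw [tsum_eq_single kstar fun k hk => by simp [hermiteCoeff_multiHermite, Ne.symm hk]]
    simp [hermiteCoeff_multiHermite]
  refine ⟨hnorm, ?_, ?_⟩
  · simp [gaussInt_multiHermite_sq, gaussInt_multiHermite_of_ne_zero s hk0]
  · rw [hnorm, inv_mul_cancel₀ (hrpos kstar).ne']

/-- the variance bound is sharp. If the maximum of `r` over nonzero
multi-indices is attained at `k*`, then `f = H_{k*}` satisfies
`‖f‖²_{K_r} = 1/r(k*)` and `I_s(f²) - I_s(f)² = 1 = ‖f‖²_{K_r} · r(k*)`. -/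
theorem variance_bound_sharp (s : ℕ) (r : (Fin s → ℕ) → ℝ)
    (hrpos : ∀ k, 0 < r k) (hrsum : Summable r)
    (kstar : Fin s → ℕ) (hk0 : kstar ≠ 0)
    (hmax : ∀ k : Fin s → ℕ, k ≠ 0 → r k ≤ r kstar) :
    (∑' k, (r k)⁻¹ * hermiteCoeff s (multiHermite s kstar) k ^ 2) = (r kstar)⁻¹ ∧
    gaussInt s (fun x => multiHermite s kstar x ^ 2)
        - (gaussInt s (multiHermite s kstar)) ^ 2 = 1 ∧
    (1 : ℝ) = (∑' k, (r k)⁻¹ * hermiteCoeff s (multiHermite s kstar) k ^ 2) * r kstar :=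
  variance_bound_sharp_general s r hrpos kstar hk0
end

section
/- For a nonincreasing sequence of positive reals γ_1 ≥ γ_2 ≥ ..., there exist constants C, q > 0 with max_{1 ≤ m ≤ s} ∏_{j=1}^m γ_j ≤ C s^q for all s ≥ 1 if and only if limsup_{s→∞} (∑_{j=1}^s max(log γ_j, 0)) / log s < ∞. -/
/-!
With `S s = ∑_{j<s} max (log γ_j) 0` we have `exp (S s) = ∏_{j<s} max γ_j 1`, and for a
nonincreasing `γ` this is the largest partial product `∏_{j<m} γ_j` over `m ≤ s` (or `1`).
So both conditions say that `exp (S s) ≤ C s^q`: taking logarithms gives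
`S s / log s ≤ log C / log s + q`, and conversely a bound valid for large `s` extends to all
`s ≥ 1` by enlarging `C` to cover the finitely many small `s`.
-/

open Real Filter

theorem Real.exp_sum_max_log_zero {ι : Type*} (s : Finset ι) {f : ι → ℝ}
    (hf : ∀ j ∈ s, 0 < f j) :
    exp (∑ j ∈ s, max (log (f j)) 0) = ∏ j ∈ s, max (f j) 1 := by
  rw [exp_sum]
  refine Finset.prod_congr rfl fun j hj => ?_
  rw [exp_strictMono.monotone.map_max, exp_log (hf j hj), exp_zero]

theorem prod_range_le_prod_range_max_one {f : ℕ → ℝ} (hf : ∀ j, 0 ≤ f j) {m n : ℕ}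
    (hmn : m ≤ n) : ∏ j ∈ Finset.range m, f j ≤ ∏ j ∈ Finset.range n, max (f j) 1 :=
  calc ∏ j ∈ Finset.range m, f j ≤ ∏ j ∈ Finset.range m, max (f j) 1 :=
        Finset.prod_le_prod (fun j _ => hf j) fun _ _ => le_max_left _ _
    _ ≤ ∏ j ∈ Finset.range n, max (f j) 1 :=
        Finset.prod_le_prod_of_subset_of_one_le (Finset.range_subset_range.mpr hmn)
          (fun _ _ => zero_le_one.trans (le_max_right _ _)) fun _ _ _ => le_max_right _ _

/-- For a nonincreasing sequence the factors that are at least `1` form an initial segment. -/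
theorem Antitone.exists_prod_range_max_one_eq {f : ℕ → ℝ} (hf : Antitone f) (n : ℕ) :
    ∃ m ≤ n, ∏ j ∈ Finset.range n, max (f j) 1 = ∏ j ∈ Finset.range m, f j := by
  induction n with
  | zero => exact ⟨0, le_rfl, rfl⟩
  | succ n ih =>
    by_cases hn : 1 ≤ f n
    · refine ⟨n + 1, le_rfl, Finset.prod_congr rfl fun j hj => max_eq_left ?_⟩
      exact hn.trans (hf (Nat.le_of_lt_succ (Finset.mem_range.mp hj)))
    · obtain ⟨m, hmn, heq⟩ := ih
      refine ⟨m, hmn.trans n.le_succ, ?_⟩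
      rw [Finset.prod_range_succ, max_eq_right (le_of_not_ge hn), mul_one, heq]

theorem eventually_div_log_le_of_exp_le_rpow {S : ℕ → ℝ} {C q : ℝ} (hC : 0 < C)
    (h : ∀ s : ℕ, 1 ≤ s → exp (S s) ≤ C * (s : ℝ) ^ q) :
    ∀ᶠ s : ℕ in atTop, S s / log s ≤ max (log C) 0 + q := by
  filter_upwards [(tendsto_log_atTop.comp tendsto_natCast_atTop_atTop).eventually_ge_atTop 1,
    eventually_ge_atTop 1] with s (hlog : 1 ≤ log s) hs
  have hs_pos : (0 : ℝ) < s := by exact_mod_cast hs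
  have hS : S s ≤ log C + q * log s := by
    rw [← log_rpow hs_pos, ← log_mul hC.ne' (by positivity), ← exp_le_exp,
      exp_log (by positivity)]
    exact h s hs
  rw [div_le_iff₀ (by linarith)]
  nlinarith [le_max_left (log C) 0, le_max_right (log C) 0]

theorem exists_exp_le_rpow_of_eventually_div_log_le {S : ℕ → ℝ} {A : ℝ}
    (h : ∀ᶠ s : ℕ in atTop, S s / log s ≤ A) :
    ∃ C q : ℝ, 0 < C ∧ 0 < q ∧ ∀ s : ℕ, 1 ≤ s → exp (S s) ≤ C * (s : ℝ) ^ q := by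
  obtain ⟨N, hN⟩ := eventually_atTop.mp (h.and (eventually_gt_atTop 1))
  set D := ∑ t ∈ Finset.range N, exp (S t)
  have hD : 0 ≤ D := Finset.sum_nonneg fun t _ => (exp_pos _).le
  refine ⟨1 + D, max A 1, by positivity, by positivity, fun s hs => ?_⟩
  have hs_one : (1 : ℝ) ≤ s := by exact_mod_cast hs
  have hpow : 1 ≤ (s : ℝ) ^ max A 1 := one_le_rpow hs_one (by positivity)
  rcases lt_or_ge s N with hsN | hsN
  · calc exp (S s) ≤ D := Finset.single_le_sum (fun t _ => (exp_pos _).le)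
          (Finset.mem_range.mpr hsN)
      _ ≤ (1 + D) * 1 := by linarith
      _ ≤ (1 + D) * (s : ℝ) ^ max A 1 := by gcongr
  · obtain ⟨hdiv, hs_gt⟩ := hN s hsN
    have hs_pos : (0 : ℝ) < s := by positivity
    have hlog : 0 < log s := log_pos (by exact_mod_cast hs_gt)
    calc exp (S s) ≤ exp (A * log s) := exp_le_exp.mpr ((div_le_iff₀ hlog).mp hdiv)
      _ = (s : ℝ) ^ A := by rw [rpow_def_of_pos hs_pos, mul_comm]
      _ ≤ (s : ℝ) ^ max A 1 := rpow_le_rpow_of_exponent_le hs_one (le_max_left _ _)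
      _ ≤ (1 + D) * (s : ℝ) ^ max A 1 := le_mul_of_one_le_left (by positivity) (by linarith)

/-- for a nonincreasing sequence of positive reals `γ`, the maxima of
partial products grow at most polynomially in `s` iff the limsup of
`(∑_{j=1}^s max(log γ_j, 0)) / log s` is finite (i.e. the sequence is eventually
bounded above). -/
theorem poly_growth_iff_limsup_finite (γ : ℕ → ℝ) (hpos : ∀ j, 0 < γ j)
    (hmono : Antitone γ) :
    (∃ C q : ℝ, 0 < C ∧ 0 < q ∧ ∀ s : ℕ, ∀ hs : 1 ≤ s,
        (Finset.Icc 1 s).sup' (Finset.nonempty_Icc.mpr hs)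
            (fun m => ∏ j ∈ Finset.range m, γ j) ≤ C * (s : ℝ) ^ q) ↔
      (∃ A : ℝ, ∀ᶠ s : ℕ in atTop,
        (∑ j ∈ Finset.range s, max (Real.log (γ j)) 0) / Real.log s ≤ A) := by
  have hexp (s : ℕ) : exp (∑ j ∈ Finset.range s, max (log (γ j)) 0) =
      ∏ j ∈ Finset.range s, max (γ j) 1 :=
    exp_sum_max_log_zero _ fun j _ => hpos j
  constructor
  · rintro ⟨C, q, hC, hq, hbound⟩
    refine ⟨_, eventually_div_log_le_of_exp_le_rpow (C := max C 1) (q := q) (by positivity)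
      fun s hs => ?_⟩
    obtain ⟨m, hms, heq⟩ := hmono.exists_prod_range_max_one_eq s
    have hpow : 1 ≤ (s : ℝ) ^ q := one_le_rpow (by exact_mod_cast hs) hq.le
    rw [hexp, heq]
    rcases m.eq_zero_or_pos with rfl | hm
    · simpa using one_le_mul_of_one_le_of_one_le (le_max_right C 1) hpow
    · calc ∏ j ∈ Finset.range m, γ j ≤ C * (s : ℝ) ^ q :=
            (Finset.le_sup' (fun m => ∏ j ∈ Finset.range m, γ j)
              (Finset.mem_Icc.mpr ⟨hm, hms⟩)).trans (hbound s hs)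
        _ ≤ max C 1 * (s : ℝ) ^ q := by gcongr; exact le_max_left C 1
  · rintro ⟨A, hA⟩
    obtain ⟨C, q, hC, hq, hbound⟩ := exists_exp_le_rpow_of_eventually_div_log_le hA
    refine ⟨C, q, hC, hq, fun s hs => Finset.sup'_le _ _ fun m hm => ?_⟩
    calc ∏ j ∈ Finset.range m, γ j ≤ ∏ j ∈ Finset.range s, max (γ j) 1 :=
          prod_range_le_prod_range_max_one (fun j => (hpos j).le) (Finset.mem_Icc.mp hm).2
      _ ≤ C * (s : ℝ) ^ q := hexp s ▸ hbound s hs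
end

section
/- Suppose n^{MC}(ε,s) = ⌈C_s ε^{-2}⌉ where C_s = max_{1 ≤ m ≤ s} ∏_{j=1}^m γ_j for a nonincreasing positive sequence {γ_j}. Then n^{MC}(ε,s) ≤ c ε^{-p} for constants c, p > 0 and all s, ε (strong polynomial tractability) if and only if ∑_{j=1}^∞ max(log γ_j, 0) < ∞, and in that case one may take p = 2. -/
/-
Since `γ` is nonincreasing, either some `γ_j < 1`, and then only finitely many `log γ_j` are
positive, or all `γ_j ≥ 1`, and then `∑_{j<m} max(log γ_j, 0) = log ∏_{j<m} γ_j`. In both cases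
`∑_j max(log γ_j, 0) < ∞` exactly when the partial products `∏_{j<m} γ_j`, hence the `C_s`, are
bounded. A uniform bound `C_s ≤ K` gives `⌈C_s ε⁻²⌉ ≤ (K + 1) ε⁻²`, and conversely taking
`ε = 1/2` in `⌈C_s ε⁻²⌉ ≤ c ε^{-p}` bounds `C_s` by `c 2^p / 4`.
-/

open Real

/-- `C_s = max_{1 ≤ m ≤ s} ∏_{j=1}^m γ_j` (with `γ j` standing for `γ_{j+1}`). -/
noncomputable def Cmax (γ : ℕ → ℝ) (s : ℕ) : ℝ :=
  sSup {v : ℝ | ∃ m : ℕ, 1 ≤ m ∧ m ≤ s ∧ v = ∏ j ∈ Finset.range m, γ j}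

open Finset

section

variable {γ : ℕ → ℝ}

lemma prod_range_le_Cmax {m s : ℕ} (hm : 1 ≤ m) (hms : m ≤ s) :
    ∏ j ∈ range m, γ j ≤ Cmax γ s := by
  have hfin : {v : ℝ | ∃ m : ℕ, 1 ≤ m ∧ m ≤ s ∧ v = ∏ j ∈ range m, γ j}.Finite :=
    ((Set.finite_Icc 1 s).image fun m => ∏ j ∈ range m, γ j).subset
      fun _ ⟨m, hm, hms, hv⟩ => ⟨m, ⟨hm, hms⟩, hv.symm⟩
  exact le_csSup hfin.bddAbove ⟨m, hm, hms, rfl⟩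

lemma Cmax_le {s : ℕ} {K : ℝ} (hs : 1 ≤ s)
    (h : ∀ m, 1 ≤ m → m ≤ s → ∏ j ∈ range m, γ j ≤ K) : Cmax γ s ≤ K :=
  csSup_le ⟨_, 1, le_rfl, hs, rfl⟩ fun _ ⟨m, hm, hms, hv⟩ => hv ▸ h m hm hms

lemma bddAbove_prod_range_of_Cmax_le {K : ℝ} (h : ∀ s, 1 ≤ s → Cmax γ s ≤ K) :
    BddAbove (Set.range fun m => ∏ j ∈ range m, γ j) := by
  refine ⟨max K 1, ?_⟩
  rintro _ ⟨m, rfl⟩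
  rcases Nat.eq_zero_or_pos m with rfl | hm
  · simp
  · exact (prod_range_le_Cmax hm le_rfl).trans ((h m hm).trans (le_max_left _ _))

lemma summable_posPart_log_of_lt_one (hnonneg : ∀ j, 0 ≤ γ j) (hmono : Antitone γ) {j : ℕ}
    (hj : γ j < 1) : Summable fun k => max (log (γ k)) 0 := by
  refine summable_of_ne_finset_zero (s := range j) fun k hk => ?_
  have hkj : γ k ≤ γ j := hmono (by simpa using hk)
  exact max_eq_right (log_nonpos (hnonneg k) (by linarith))

lemma summable_posPart_log_iff_bddAbove_prod (hpos : ∀ j, 0 < γ j) (hmono : Antitone γ) :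
    (Summable fun j => max (log (γ j)) 0) ↔
      BddAbove (Set.range fun m => ∏ j ∈ range m, γ j) := by
  have hlog_prod : ∀ m, log (∏ j ∈ range m, γ j) = ∑ j ∈ range m, log (γ j) :=
    fun m => log_prod (fun j _ => (hpos j).ne')
  have hprod_pos : ∀ m, 0 < ∏ j ∈ range m, γ j := fun m => prod_pos fun j _ => hpos j
  constructor
  · intro hsum
    refine ⟨exp (∑' j, max (log (γ j)) 0), ?_⟩
    rintro _ ⟨m, rfl⟩
    dsimp only
    rw [← exp_log (hprod_pos m), exp_le_exp, hlog_prod]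
    calc ∑ j ∈ range m, log (γ j) ≤ ∑ j ∈ range m, max (log (γ j)) 0 :=
          sum_le_sum fun j _ => le_max_left _ _
      _ ≤ ∑' j, max (log (γ j)) 0 := hsum.sum_le_tsum _ fun j _ => le_max_right _ _
  · rintro ⟨B, hB⟩
    by_cases h : ∃ j, γ j < 1
    · obtain ⟨j, hj⟩ := h
      exact summable_posPart_log_of_lt_one (fun j => (hpos j).le) hmono hj
    simp only [not_exists, not_lt] at h
    simp only [fun j => max_eq_left (log_nonneg (h j))]
    refine summable_of_sum_range_le (c := log B) (fun j => log_nonneg (h j)) fun m => ?_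
    rw [← hlog_prod]
    exact log_le_log (hprod_pos m) (hB ⟨m, rfl⟩)

end

lemma natCast_ceil_mul_le {C K x : ℝ} (hK : 0 ≤ K) (hC : C ≤ K) (hx : 1 ≤ x) :
    (⌈C * x⌉₊ : ℝ) ≤ (K + 1) * x := by
  have hKx : 0 ≤ K * x := mul_nonneg hK (by linarith)
  calc (⌈C * x⌉₊ : ℝ) ≤ ⌈K * x⌉₊ := by
        exact_mod_cast Nat.ceil_mono (mul_le_mul_of_nonneg_right hC (by linarith))
    _ ≤ K * x + 1 := (Nat.ceil_lt_add_one hKx).le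
    _ ≤ (K + 1) * x := by linarith

/-- with `n^{MC}(ε,s) = ⌈C_s ε^{-2}⌉`, strong polynomial
tractability holds iff `∑_j max(log γ_j, 0) < ∞`, and in that case one may take
`p = 2`. -/
theorem strong_poly_tractability_iff (γ : ℕ → ℝ) (hpos : ∀ j, 0 < γ j)
    (hmono : Antitone γ) :
    ((∃ c p : ℝ, 0 < c ∧ 0 < p ∧ ∀ s : ℕ, 1 ≤ s → ∀ ε : ℝ, ε ∈ Set.Ioo (0 : ℝ) 1 →
        ((⌈Cmax γ s * ε⁻¹ ^ 2⌉₊ : ℕ) : ℝ) ≤ c * ε⁻¹ ^ p) ↔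
      Summable (fun j => max (Real.log (γ j)) 0)) ∧
    (Summable (fun j => max (Real.log (γ j)) 0) →
      ∃ c : ℝ, 0 < c ∧ ∀ s : ℕ, 1 ≤ s → ∀ ε : ℝ, ε ∈ Set.Ioo (0 : ℝ) 1 →
        ((⌈Cmax γ s * ε⁻¹ ^ 2⌉₊ : ℕ) : ℝ) ≤ c * ε⁻¹ ^ 2) := by
  rw [summable_posPart_log_iff_bddAbove_prod hpos hmono]
  have bound_of_bdd : BddAbove (Set.range fun m => ∏ j ∈ range m, γ j) →
      ∃ c : ℝ, 0 < c ∧ ∀ s : ℕ, 1 ≤ s → ∀ ε : ℝ, ε ∈ Set.Ioo (0 : ℝ) 1 →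
        ((⌈Cmax γ s * ε⁻¹ ^ 2⌉₊ : ℕ) : ℝ) ≤ c * ε⁻¹ ^ 2 := by
    rintro ⟨B, hB⟩
    have hB1 : 1 ≤ B := by simpa using hB ⟨0, rfl⟩
    refine ⟨B + 1, by linarith, fun s hs ε ⟨hε0, hε1⟩ => ?_⟩
    exact natCast_ceil_mul_le (by linarith) (Cmax_le hs fun m _ _ => hB ⟨m, rfl⟩)
      (one_le_pow₀ ((one_le_inv₀ hε0).2 hε1.le))
  refine ⟨⟨fun ⟨c, p, _, _, hb⟩ => ?_, fun hbdd => ?_⟩, bound_of_bdd⟩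
  · refine bddAbove_prod_range_of_Cmax_le (K := c * 2 ^ p / 4) fun s hs => ?_
    have h := (Nat.le_ceil _).trans (hb s hs (1 / 2) ⟨by norm_num, by norm_num⟩)
    norm_num at h
    linarith
  · obtain ⟨c, hc, hb⟩ := bound_of_bdd hbdd
    exact ⟨c, 2, hc, two_pos, fun s hs ε hε => by exact_mod_cast hb s hs ε hε⟩
end

section
/- Suppose n^{MC}(ε,s) = ⌈C_s ε^{-2}⌉ with C_s = max_{1 ≤ m ≤ s} ∏_{j=1}^m γ_j for a nonincreasing positive sequence {γ_j}. Then lim_{s+ε^{-1}→∞} log(n^{MC}(ε,s))/(s + ε^{-1}) = 0 (weak tractability) if and only if lim_{s→∞} (∑_{j=1}^s max(log γ_j, 0))/s = 0. -/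
/-! Since the `γ_j` decrease, the positive `log γ_j` form an initial segment, so the largest
partial sum `∑_{j ≤ m} log γ_j` over `m ≤ s` is `T_s + min (log γ_1, 0)`, where
`T_s = ∑_{j ≤ s} max (log γ_j, 0)`; hence `log C_s = T_s + O(1)`. Weak tractability of
`⌈C_s ε⁻²⌉` is equivalent to `log C_s = o(s)`: for one direction take `ε = 1/2`, for the other
combine `log C_s ≤ (δ/4) s + K` with `log ε⁻¹ ≤ (δ/4) ε⁻¹ + O_δ(1)`. -/

open Real Filter

open Finset Topology

theorem sum_range_le_sum_max_add_min (a : ℕ → ℝ) {m s : ℕ} (hm : 1 ≤ m) (hms : m ≤ s) :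
    ∑ j ∈ range m, a j ≤ ∑ j ∈ range s, max (a j) 0 + min (a 0) 0 := by
  obtain ⟨k, rfl⟩ : ∃ k, m = k + 1 := ⟨m - 1, by omega⟩
  obtain ⟨t, rfl⟩ : ∃ t, s = t + 1 := ⟨s - 1, by omega⟩
  rw [sum_range_succ', sum_range_succ']
  have hk : ∑ i ∈ range k, a (i + 1) ≤ ∑ i ∈ range t, max (a (i + 1)) 0 :=
    calc ∑ i ∈ range k, a (i + 1) ≤ ∑ i ∈ range k, max (a (i + 1)) 0 :=
          sum_le_sum fun i _ => le_max_left _ _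
      _ ≤ ∑ i ∈ range t, max (a (i + 1)) 0 :=
          sum_le_sum_of_subset_of_nonneg (range_subset_range.2 (by omega))
            fun i _ _ => le_max_right _ _
  linarith [max_add_min (a 0) 0]

theorem Antitone.exists_sum_range_eq_sum_max_add_min {a : ℕ → ℝ} (ha : Antitone a) {s : ℕ}
    (hs : 1 ≤ s) :
    ∃ m ∈ Set.Icc 1 s, ∑ j ∈ range m, a j = ∑ j ∈ range s, max (a j) 0 + min (a 0) 0 := by
  induction s, hs using Nat.le_induction with
  | base => exact ⟨1, ⟨le_rfl, le_rfl⟩, by simp [max_add_min]⟩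
  | succ s hs ih =>
    by_cases has : 0 ≤ a s
    · refine ⟨s + 1, ⟨by omega, le_rfl⟩, ?_⟩
      have hnonneg : ∀ j ∈ range (s + 1), 0 ≤ a j := fun j hj =>
        has.trans (ha (Nat.lt_succ_iff.1 (mem_range.1 hj)))
      rw [sum_congr rfl fun j hj => (max_eq_left (hnonneg j hj)).symm,
        min_eq_right (hnonneg 0 (by simp)), add_zero]
    · obtain ⟨m, ⟨hm1, hms⟩, hm⟩ := ih
      refine ⟨m, ⟨hm1, hms.trans s.le_succ⟩, ?_⟩
      rw [sum_range_succ, max_eq_right (le_of_not_ge has), add_zero, hm]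

theorem Antitone.isGreatest_image_sum_range {a : ℕ → ℝ} (ha : Antitone a) {s : ℕ}
    (hs : 1 ≤ s) :
    IsGreatest ((fun m => ∑ j ∈ range m, a j) '' Set.Icc 1 s)
      (∑ j ∈ range s, max (a j) 0 + min (a 0) 0) := by
  refine ⟨?_, ?_⟩
  · obtain ⟨m, hm, hsum⟩ := ha.exists_sum_range_eq_sum_max_add_min hs
    exact ⟨m, hm, hsum⟩
  · rintro _ ⟨m, ⟨hm1, hms⟩, rfl⟩
    exact sum_range_le_sum_max_add_min a hm1 hms

theorem Cmax_eq_exp {γ : ℕ → ℝ} (hpos : ∀ j, 0 < γ j) (hmono : Antitone γ) {s : ℕ}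
    (hs : 1 ≤ s) :
    Cmax γ s = exp (∑ j ∈ range s, max (log (γ j)) 0 + min (log (γ 0)) 0) := by
  have hlog : Antitone (fun j => log (γ j)) := fun i j hij => log_le_log (hpos j) (hmono hij)
  have hset : {v : ℝ | ∃ m : ℕ, 1 ≤ m ∧ m ≤ s ∧ v = ∏ j ∈ range m, γ j} =
      exp '' ((fun m => ∑ j ∈ range m, log (γ j)) '' Set.Icc 1 s) := by
    ext v
    simp only [Set.image_image, exp_sum, exp_log (hpos _), Set.mem_ofPred_eq, Set.mem_image,
      Set.mem_Icc, and_assoc, eq_comm]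
  rw [Cmax, hset, (exp_monotone.map_isGreatest (hlog.isGreatest_image_sum_range hs)).csSup_eq]

theorem log_Cmax {γ : ℕ → ℝ} (hpos : ∀ j, 0 < γ j) (hmono : Antitone γ) {s : ℕ}
    (hs : 1 ≤ s) :
    log (Cmax γ s) = ∑ j ∈ range s, max (log (γ j)) 0 + min (log (γ 0)) 0 := by
  rw [Cmax_eq_exp hpos hmono hs, log_exp]

theorem log_le_mul_sub_one_sub_log {η t : ℝ} (hη : 0 < η) (ht : 0 < t) :
    log t ≤ η * t - 1 - log η := by
  have h := log_le_sub_one_of_pos (mul_pos hη ht)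
  rw [log_mul hη.ne' ht.ne'] at h
  linarith

theorem log_natCeil_le_log_two_add {x b : ℝ} (hx : 0 < x) (hb : 0 ≤ b) (hxb : log x ≤ b) :
    log (⌈x⌉₊ : ℝ) ≤ log 2 + b := by
  have hceil : (⌈x⌉₊ : ℝ) ≤ 2 * exp b := by
    have h1 : x ≤ exp b := (log_le_iff_le_exp hx).1 hxb
    have h2 : 1 ≤ exp b := one_le_exp hb
    linarith [Nat.ceil_lt_add_one hx.le]
  calc log (⌈x⌉₊ : ℝ) ≤ log (2 * exp b) :=
        log_le_log (by exact_mod_cast Nat.ceil_pos.2 hx) hceil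
    _ = log 2 + b := by rw [log_mul two_ne_zero (exp_pos b).ne', log_exp]

theorem exists_le_mul_add_of_tendsto_div {f : ℕ → ℝ}
    (hf : Tendsto (fun n : ℕ => f n / n) atTop (𝓝 0)) {η : ℝ} (hη : 0 < η) :
    ∃ K, ∀ n : ℕ, f n ≤ η * n + K := by
  obtain ⟨N, hN⟩ := eventually_atTop.1
    ((hf.eventually (gt_mem_nhds hη)).and (eventually_ge_atTop 1))
  refine ⟨∑ n ∈ range N, |f n|, fun n => ?_⟩
  have hK : 0 ≤ ∑ n ∈ range N, |f n| := sum_nonneg fun n _ => abs_nonneg _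
  rcases lt_or_ge n N with hn | hn
  · have : |f n| ≤ ∑ n ∈ range N, |f n| :=
      single_le_sum (fun n _ => abs_nonneg (f n)) (mem_range.2 hn)
    nlinarith [le_abs_self (f n), (Nat.cast_nonneg n : (0 : ℝ) ≤ n)]
  · obtain ⟨hlt, hn1⟩ := hN n hn
    have hnpos : (0 : ℝ) < n := by exact_mod_cast hn1
    rw [div_lt_iff₀ hnpos] at hlt
    linarith

def WeakTractable (C : ℕ → ℝ) : Prop :=
  ∀ δ : ℝ, 0 < δ → ∃ M : ℝ, ∀ s : ℕ, 1 ≤ s → ∀ ε : ℝ, ε ∈ Set.Ioo (0 : ℝ) 1 →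
    M ≤ (s : ℝ) + ε⁻¹ → log (⌈C s * ε⁻¹ ^ 2⌉₊ : ℝ) / ((s : ℝ) + ε⁻¹) < δ

theorem WeakTractable.tendsto_log_div {C : ℕ → ℝ} (hC : ∀ s, 1 ≤ s → 0 < C s) {c : ℝ}
    (hc : ∀ s, 1 ≤ s → c ≤ log (C s)) (h : WeakTractable C) :
    Tendsto (fun s : ℕ => log (C s) / s) atTop (𝓝 0) := by
  refine tendsto_order.2 ⟨fun a ha => ?_, fun a ha => ?_⟩
  · filter_upwards [(tendsto_const_div_atTop_nhds_zero_nat c).eventually (lt_mem_nhds ha),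
      eventually_ge_atTop 1] with s hcs hs
    exact hcs.trans_le (div_le_div_of_nonneg_right (hc s hs) s.cast_nonneg)
  · obtain ⟨M, hM⟩ := h (a / 2) (half_pos ha)
    filter_upwards [tendsto_natCast_atTop_atTop.eventually_ge_atTop M, eventually_ge_atTop 2]
      with s hsM hs2
    have hs : (2 : ℝ) ≤ s := by exact_mod_cast hs2
    have key := hM s (by omega) (1 / 2) ⟨by norm_num, by norm_num⟩ (by norm_num; linarith)
    norm_num at key
    rw [div_lt_iff₀ (by linarith)] at key
    have hlog : log (C s) + log 4 ≤ log (⌈C s * 4⌉₊ : ℝ) := by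
      rw [← log_mul (hC s (by omega)).ne' (by norm_num)]
      exact log_le_log (by linarith [hC s (by omega)]) (Nat.le_ceil _)
    rw [div_lt_iff₀ (by linarith)]
    nlinarith [log_nonneg (by norm_num : (1 : ℝ) ≤ 4)]

theorem weakTractable_of_tendsto_log_div {C : ℕ → ℝ} (hC : ∀ s, 1 ≤ s → 0 < C s)
    (h : Tendsto (fun s : ℕ => log (C s) / s) atTop (𝓝 0)) : WeakTractable C := by
  intro δ hδ
  obtain ⟨K, hK⟩ := exists_le_mul_add_of_tendsto_div h (by positivity : 0 < δ / 4)
  set A := |K - 2 - 2 * log (δ / 4)|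
  refine ⟨2 * (log 2 + A) / δ + 1, fun s hs ε ⟨hε0, hε1⟩ hM => ?_⟩
  have hD : 0 < (s : ℝ) + ε⁻¹ := by positivity
  have hlogε := log_le_mul_sub_one_sub_log (by positivity : 0 < δ / 4) (inv_pos.2 hε0)
  have hCs := hC s hs
  have hlogx : log (C s * ε⁻¹ ^ 2) ≤ δ / 2 * ((s : ℝ) + ε⁻¹) + A := by
    rw [log_mul hCs.ne' (by positivity), log_pow]
    have := hK s
    have := le_abs_self (K - 2 - 2 * log (δ / 4))
    push_cast
    nlinarith
  have hcost := log_natCeil_le_log_two_add (by positivity) (by positivity) hlogx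
  have hA : 2 * (log 2 + A) < δ * ((s : ℝ) + ε⁻¹) := by
    rw [← div_lt_iff₀' hδ]; linarith
  rw [div_lt_iff₀ hD]
  linarith

/-- with `n^{MC}(ε,s) = ⌈C_s ε^{-2}⌉`, weak tractability, i.e.
`log(n^{MC}(ε,s))/(s + ε^{-1}) → 0` as `s + ε^{-1} → ∞`, holds iff
`(∑_{j=1}^s max(log γ_j, 0))/s → 0`. -/
theorem weak_tractability_iff (γ : ℕ → ℝ) (hpos : ∀ j, 0 < γ j)
    (hmono : Antitone γ) :
    ((∀ δ : ℝ, 0 < δ → ∃ M : ℝ, ∀ s : ℕ, 1 ≤ s → ∀ ε : ℝ, ε ∈ Set.Ioo (0 : ℝ) 1 →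
        M ≤ (s : ℝ) + ε⁻¹ →
        Real.log (⌈Cmax γ s * ε⁻¹ ^ 2⌉₊ : ℝ) / ((s : ℝ) + ε⁻¹) < δ) ↔
      Tendsto (fun s : ℕ =>
        (∑ j ∈ Finset.range s, max (Real.log (γ j)) 0) / s) atTop (nhds 0)) := by
  set c := min (log (γ 0)) 0
  have hCpos : ∀ s, 1 ≤ s → 0 < Cmax γ s := fun s hs => by
    rw [Cmax_eq_exp hpos hmono hs]; exact exp_pos _
  have hc : ∀ s, 1 ≤ s → c ≤ log (Cmax γ s) := fun s hs => by
    rw [log_Cmax hpos hmono hs]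
    exact le_add_of_nonneg_left (sum_nonneg fun j _ => le_max_right _ _)
  have hsplit : (fun s : ℕ => log (Cmax γ s) / s) =ᶠ[atTop]
      fun s => (∑ j ∈ range s, max (log (γ j)) 0) / s + c / s := by
    filter_upwards [eventually_ge_atTop 1] with s hs
    rw [log_Cmax hpos hmono hs, add_div]
  have hc0 := tendsto_const_div_atTop_nhds_zero_nat c
  change WeakTractable (Cmax γ) ↔ _
  refine ⟨fun h => ?_, fun h => weakTractable_of_tendsto_log_div hCpos ?_⟩
  · simpa using ((h.tendsto_log_div hCpos hc).congr' hsplit).sub hc0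
  · simpa using (h.add hc0).congr' hsplit.symm
end
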